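/- arXiv:1609.03620 — 4 statements merged into one kernel-verified Lean document; each statement's English description precedes it below -/
import Mathlib

section
/- Let (G,σ) be a 2-edge-connected signed graph whose signature attains the minimum number of negative edges among equivalent signatures. If F is a family of circuits of (G,σ) such that every negative edge lies on a cycle of some circuit in F, then F covers every cutedge of the positive subgraph G⁺ = G \ E⁻(G,σ). -/
open SimpleGraph

open scoped Classical

variable {V : Type*} [Fintype V] [DecidableEq V]

/-- Number of negative edges (w.r.t. signature `σ`, `true` = negative) in a set of edges. -/
noncomputable def negCount (σ : Sym2 V → Bool) (s : Set (Sym2 V)) : ℕ :=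
  {e ∈ s | σ e = true}.ncard

/-- A subgraph is a cycle: connected and 2-regular (on its vertex set). -/
def SubIsCycle (G : SimpleGraph V) (C : G.Subgraph) : Prop :=
  C.Connected ∧ ∀ v ∈ C.verts, (C.neighborSet v).ncard = 2

/-- A positive cycle: a cycle with an even number of negative edges. -/
def IsPosCycle (G : SimpleGraph V) (σ : Sym2 V → Bool) (C : G.Subgraph) : Prop :=
  SubIsCycle G C ∧ Even (negCount σ C.edgeSet)

/-- A negative cycle: a cycle with an odd number of negative edges. -/
def IsNegCycle (G : SimpleGraph V) (σ : Sym2 V → Bool) (C : G.Subgraph) : Prop :=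
  SubIsCycle G C ∧ Odd (negCount σ C.edgeSet)

/-- A subgraph is a path from `u` to `v` (possibly of length zero). -/
def IsPathSub (G : SimpleGraph V) (P : G.Subgraph) (u v : V) : Prop :=
  ∃ w : G.Walk u v, w.IsPath ∧ P = w.toSubgraph

/-- A barbell: two edge-disjoint negative cycles joined by a path (possibly of length zero). -/
def IsBarbell (G : SimpleGraph V) (σ : Sym2 V → Bool) (B : G.Subgraph) : Prop :=
  ∃ C₁ C₂ P : G.Subgraph, IsNegCycle G σ C₁ ∧ IsNegCycle G σ C₂ ∧
    C₁.edgeSet ∩ C₂.edgeSet = ∅ ∧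
    (∃ u v : V, IsPathSub G P u v ∧ u ∈ C₁.verts ∧ v ∈ C₂.verts ∧
      P.verts ∩ C₁.verts = {u} ∧ P.verts ∩ C₂.verts = {v}) ∧
    C₁.verts ∩ C₂.verts ⊆ P.verts ∧
    B = C₁ ⊔ C₂ ⊔ P

/-- A circuit of a signed graph: a positive cycle or a barbell. -/
def IsCircuit (G : SimpleGraph V) (σ : Sym2 V → Bool) (C : G.Subgraph) : Prop :=
  IsPosCycle G σ C ∨ IsBarbell G σ C

/-- Total length (number of edges, with multiplicity) of a family of subgraphs. -/
noncomputable def coverLen (G : SimpleGraph V) (F : Multiset G.Subgraph) : ℕ :=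
  (F.map fun C => C.edgeSet.ncard).sum

/-- A circuit cover: a family of circuits covering all edges of the graph. -/
def IsCircuitCover (G : SimpleGraph V) (σ : Sym2 V → Bool) (F : Multiset G.Subgraph) : Prop :=
  (∀ C ∈ F, IsCircuit G σ C) ∧ ∀ e ∈ G.edgeSet, ∃ C ∈ F, e ∈ C.edgeSet

/-- The length of a shortest circuit cover. -/
noncomputable def scc (G : SimpleGraph V) (σ : Sym2 V → Bool) : ℕ :=
  sInf {n | ∃ F : Multiset G.Subgraph, IsCircuitCover G σ F ∧ coverLen G F = n}

/-- An edge crosses the cut determined by a vertex set `X`. -/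
def crossesCut (X : Set V) (e : Sym2 V) : Prop :=
  ∃ u v : V, e = s(u, v) ∧ (u ∈ X ↔ v ∉ X)

/-- The edge cut of `G` determined by the vertex set `X`. -/
def cutEdges (G : SimpleGraph V) (X : Set V) : Set (Sym2 V) :=
  {e ∈ G.edgeSet | crossesCut X e}

/-- Two signatures are (switching) equivalent: they differ exactly on an edge cut. -/
def SwitchEquiv (G : SimpleGraph V) (σ σ' : Sym2 V → Bool) : Prop :=
  ∃ X : Set V, ∀ e ∈ G.edgeSet,
    (crossesCut X e → σ' e = !σ e) ∧ (¬crossesCut X e → σ' e = σ e)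

/-- The negativeness: minimum number of negative edges over equivalent signatures. -/
noncomputable def epsilonNeg (G : SimpleGraph V) (σ : Sym2 V → Bool) : ℕ :=
  sInf {n | ∃ σ' : Sym2 V → Bool, SwitchEquiv G σ σ' ∧ negCount σ' G.edgeSet = n}

/-- `σ` attains the minimum number of negative edges among equivalent signatures. -/
def MinSignature (G : SimpleGraph V) (σ : Sym2 V → Bool) : Prop :=
  negCount σ G.edgeSet = epsilonNeg G σ

/-- `G` is 2-edge-connected: connected and with no cutedge. -/
def TwoEdgeConnected (G : SimpleGraph V) : Prop :=
  G.Connected ∧ ∀ e ∈ G.edgeSet, (G.deleteEdges {e}).Connected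

/-- `G` is cubic (3-regular). -/
def IsCubic (G : SimpleGraph V) : Prop :=
  ∀ v : V, (G.neighborSet v).ncard = 3

/-- The positive subgraph `G⁺`: delete all negative edges. -/
def posSubgraph (G : SimpleGraph V) (σ : Sym2 V → Bool) : SimpleGraph V :=
  G.deleteEdges {e | σ e = true}

/-- Number of edges of `G`. -/
noncomputable def numEdges (G : SimpleGraph V) : ℕ := G.edgeSet.ncard

/-- A cycle-tree: connected, no degree-1 vertices, all cycles pairwise edge-disjoint. -/
def IsCycleTree (H : SimpleGraph V) : Prop :=
  H.Connected ∧ (∀ v : V, (H.neighborSet v).ncard ≠ 1) ∧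
    ∀ C₁ C₂ : H.Subgraph, SubIsCycle H C₁ → SubIsCycle H C₂ → C₁ ≠ C₂ →
      C₁.edgeSet ∩ C₂.edgeSet = ∅

/-- A signed cycle-tree: a cycle-tree in which every cycle has a negative edge. -/
def IsSignedCycleTree (H : SimpleGraph V) (σ : Sym2 V → Bool) : Prop :=
  IsCycleTree H ∧ ∀ C : H.Subgraph, SubIsCycle H C → 0 < negCount σ C.edgeSet

/-- A leaf-cycle of `H`: a cycle `D` attached to the rest of `H` through a single vertex `v`. -/
def IsLeafCycle (H : SimpleGraph V) (D : H.Subgraph) : Prop :=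
  SubIsCycle H D ∧ ∃ v ∈ D.verts, ∀ e ∈ H.edgeSet,
    (∃ u : V, u ∈ e ∧ u ∈ D.verts ∧ u ≠ v) → e ∈ D.edgeSet

/-- A subgraph `N` of `G` is a cycle-tree. -/
def IsCycleTreeSub (G : SimpleGraph V) (N : G.Subgraph) : Prop :=
  N.Connected ∧ (∀ v ∈ N.verts, (N.neighborSet v).ncard ≠ 1) ∧
    ∀ C₁ C₂ : G.Subgraph, C₁ ≤ N → C₂ ≤ N → SubIsCycle G C₁ → SubIsCycle G C₂ →
      C₁ ≠ C₂ → C₁.edgeSet ∩ C₂.edgeSet = ∅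

/-- A leaf-cycle of a cycle-tree subgraph `N`. -/
def IsLeafCycleOf (G : SimpleGraph V) (N D : G.Subgraph) : Prop :=
  D ≤ N ∧ SubIsCycle G D ∧ ∃ v ∈ D.verts, ∀ e ∈ N.edgeSet,
    (∃ u : V, u ∈ e ∧ u ∈ D.verts ∧ u ≠ v) → e ∈ D.edgeSet

/-- The signed girth: minimum length of a circuit containing a negative edge. -/
noncomputable def signedGirth (G : SimpleGraph V) (σ : Sym2 V → Bool) : ℕ :=
  sInf {n | ∃ C : G.Subgraph, IsCircuit G σ C ∧ 0 < negCount σ C.edgeSet ∧ C.edgeSet.ncard = n}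


/-!
Let `e = uv` be a bridge of `G⁺` and `X` the side of `u` in `G⁺ - e`. Every positive edge of the
cut `δ(X)` is `e`, and since `G - e` is connected, `δ(X)` also contains a negative edge `f`.
Switching at `X` exchanges the signs on `δ(X)`, so minimality of `σ` leaves room for at most one
negative edge there: `δ(X) ⊆ {e, f}`. A cycle of a circuit of `F` through `f` meets the cut `δ(X)`
in an even number of edges, hence it passes through `e` as well.
-/

omit [Fintype V] [DecidableEq V] in
lemma crossesCut_mk {X : Set V} {a b : V} : crossesCut X s(a, b) ↔ (a ∈ X ↔ b ∉ X) := by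
  constructor
  · rintro ⟨x, y, hxy, h⟩
    rcases Sym2.eq_iff.mp hxy with ⟨rfl, rfl⟩ | ⟨rfl, rfl⟩
    · exact h
    · tauto
  · exact fun h => ⟨a, b, rfl, h⟩

open Finset in
lemma even_ncard_crossing_of_even_degree (H : SimpleGraph V) (X : Set V)
    (hdeg : ∀ v, Even (H.neighborSet v).ncard) :
    Even {e ∈ H.edgeSet | crossesCut X e}.ncard := by
  -- Double counting incidences of `X` with edges: a crossing edge meets `X` once, any other twice
  -- or not at all.
  have hincid : ∀ e ∈ H.edgeFinset,
      ((#{v | v ∈ X ∧ v ∈ e} : ℕ) : ZMod 2) = if crossesCut X e then 1 else 0 := by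
    intro e he
    induction e using Sym2.ind with
    | _ a b =>
    have hab : a ≠ b := (H.mem_edgeSet.mp (H.mem_edgeFinset.mp he)).ne
    have : ({v | v ∈ X ∧ v ∈ s(a, b)} : Finset V) = ({a, b} : Finset V).filter (· ∈ X) := by
      ext v; simp [and_comm]
    rw [this, crossesCut_mk]
    by_cases ha : a ∈ X <;> by_cases hb : b ∈ X <;>
      simp [Finset.filter_insert, Finset.filter_singleton, ha, hb, hab]
    decide
  have hdouble : ∑ e ∈ H.edgeFinset, #{v | v ∈ X ∧ v ∈ e}
      = ∑ v ∈ {v | v ∈ X}, H.degree v := by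
    simp_rw [← card_incidenceFinset_eq_degree, incidenceFinset_eq_filter]
    convert (sum_card_bipartiteAbove_eq_sum_card_bipartiteBelow (fun v (e : Sym2 V) => v ∈ e)).symm
      using 2 <;> simp only [bipartiteAbove, bipartiteBelow, filter_filter]
  rw [← ZMod.natCast_eq_zero_iff_even]
  calc (({e ∈ H.edgeSet | crossesCut X e}.ncard : ℕ) : ZMod 2)
      = ∑ e ∈ H.edgeFinset, if crossesCut X e then 1 else 0 := by
        rw [Finset.sum_boole, Set.ncard_eq_toFinset_card']
        congr 2; ext e; simp
    _ = ∑ e ∈ H.edgeFinset, ((#{v | v ∈ X ∧ v ∈ e} : ℕ) : ZMod 2) :=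
        (Finset.sum_congr rfl hincid).symm
    _ = ∑ v ∈ {v | v ∈ X}, (H.degree v : ZMod 2) := by exact_mod_cast congrArg Nat.cast hdouble
    _ = 0 := Finset.sum_eq_zero fun v _ => by
        rw [ZMod.natCast_eq_zero_iff_even, ← card_neighborSet_eq_degree, ← Set.toFinset_card,
          ← Set.ncard_eq_toFinset_card']
        exact hdeg v

omit [DecidableEq V] in
lemma SubIsCycle.even_ncard_crossing {G : SimpleGraph V} {D : G.Subgraph} (hD : SubIsCycle G D)
    (X : Set V) : Even {e ∈ D.edgeSet | crossesCut X e}.ncard := by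
  have := even_ncard_crossing_of_even_degree D.spanningCoe X fun v => ?_
  · rwa [Subgraph.edgeSet_spanningCoe] at this
  by_cases hv : v ∈ D.verts
  · exact (hD.2 v hv).symm ▸ even_two
  · have : D.neighborSet v = ∅ :=
      Set.eq_empty_of_forall_notMem fun w hw => hv (Subgraph.Adj.fst_mem hw)
    change Even (D.neighborSet v).ncard
    rw [this, Set.ncard_empty]
    exact Even.zero

omit [Fintype V] [DecidableEq V] in
lemma not_crossesCut_reachable_of_mem_edgeSet (H : SimpleGraph V) (u : V) {e : Sym2 V}
    (he : e ∈ H.edgeSet) : ¬crossesCut {w | H.Reachable u w} e := by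
  induction e using Sym2.ind with
  | _ a b =>
  have hab : H.Reachable a b := (H.mem_edgeSet.mp he).reachable
  have : H.Reachable u a ↔ H.Reachable u b := ⟨(·.trans hab), (·.trans hab.symm)⟩
  simp only [crossesCut_mk, Set.mem_ofPred_eq]
  tauto

omit [Fintype V] [DecidableEq V] in
lemma exists_mem_edgeSet_crossesCut {H : SimpleGraph V} {X : Set V} {u v : V}
    (huv : H.Reachable u v) (hu : u ∈ X) (hv : v ∉ X) : ∃ e ∈ H.edgeSet, crossesCut X e := by
  obtain ⟨p⟩ := huv
  obtain ⟨d, -, hd₁, hd₂⟩ := p.exists_boundary_dart X hu hv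
  exact ⟨s(d.fst, d.snd), d.adj, crossesCut_mk.mpr (iff_of_true hd₁ hd₂)⟩

omit [Fintype V] [DecidableEq V] in
lemma TwoEdgeConnected.connected_deleteEdges_singleton {G : SimpleGraph V}
    (h : TwoEdgeConnected G) (e : Sym2 V) : (G.deleteEdges {e}).Connected := by
  by_cases he : e ∈ G.edgeSet
  · exact h.2 e he
  · rw [deleteEdges_eq_self.mpr (Set.disjoint_singleton_right.mpr he)]
    exact h.1

omit [DecidableEq V] in
lemma MinSignature.ncard_neg_cutEdges_le {G : SimpleGraph V} {σ : Sym2 V → Bool}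
    (hmin : MinSignature G σ) (X : Set V) :
    {e ∈ cutEdges G X | σ e = true}.ncard ≤ {e ∈ cutEdges G X | σ e = false}.ncard := by
  set σ' : Sym2 V → Bool := fun e => if crossesCut X e then !σ e else σ e
  have hswitch : SwitchEquiv G σ σ' := ⟨X, fun e _ => ⟨fun h => if_pos h, fun h => if_neg h⟩⟩
  have hle : negCount σ G.edgeSet ≤ negCount σ' G.edgeSet :=
    hmin ▸ Nat.sInf_le ⟨σ', hswitch, rfl⟩
  have hsplit (τ : Sym2 V → Bool) := Set.ncard_inter_add_ncard_sdiff_eq_ncard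
    {e ∈ G.edgeSet | τ e = true} {e | crossesCut X e} (Set.toFinite _)
  have hσ : {e ∈ G.edgeSet | σ e = true} ∩ {e | crossesCut X e}
      = {e ∈ cutEdges G X | σ e = true} := by
    ext e; simp only [cutEdges, Set.mem_inter_iff, Set.mem_ofPred_eq]; tauto
  have hσ' : {e ∈ G.edgeSet | σ' e = true} ∩ {e | crossesCut X e}
      = {e ∈ cutEdges G X | σ e = false} := by
    ext e; by_cases h : crossesCut X e <;> simp [cutEdges, σ', h]
  have hdiff : {e ∈ G.edgeSet | σ' e = true} \ {e | crossesCut X e}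
      = {e ∈ G.edgeSet | σ e = true} \ {e | crossesCut X e} := by
    ext e; by_cases h : crossesCut X e <;> simp [σ', h]
  have h₁ := hsplit σ
  have h₂ := hsplit σ'
  rw [hσ] at h₁
  rw [hσ', hdiff] at h₂
  unfold negCount at hle
  omega

lemma cutEdges_subset_pair_of_isBridge {G : SimpleGraph V} {σ : Sym2 V → Bool}
    (h2ec : TwoEdgeConnected G) (hmin : MinSignature G σ) {u v : V}
    (hb : (posSubgraph G σ).IsBridge s(u, v)) :
    ∃ X : Set V, ∃ f ∈ cutEdges G X, σ f = true ∧ cutEdges G X ⊆ {s(u, v), f} := by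
  set H := (posSubgraph G σ).deleteEdges {s(u, v)}
  set X := {w | H.Reachable u w}
  have hpos : {e ∈ cutEdges G X | σ e = false} ⊆ {s(u, v)} := by
    rintro e ⟨⟨heG, hX⟩, hσ⟩
    by_contra hne
    refine not_crossesCut_reachable_of_mem_edgeSet H u ?_ hX
    simp_all [H, posSubgraph, edgeSet_deleteEdges]
  have hu : u ∈ X := Reachable.refl u
  obtain ⟨f, hf, hfX⟩ := exists_mem_edgeSet_crossesCut
    ((h2ec.connected_deleteEdges_singleton s(u, v)).preconnected u v) hu hb
  rw [edgeSet_deleteEdges] at hf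
  have hfσ : σ f = true := by
    by_contra h
    exact hf.2 (hpos ⟨⟨hf.1, hfX⟩, by simpa using h⟩)
  have hneg : {e ∈ cutEdges G X | σ e = true}.ncard ≤ 1 :=
    (hmin.ncard_neg_cutEdges_le X).trans
      ((Set.ncard_le_ncard hpos).trans (Set.ncard_singleton _).le)
  refine ⟨X, f, ⟨hf.1, hfX⟩, hfσ, fun e he => ?_⟩
  cases hσe : σ e
  · exact Or.inl (hpos ⟨he, hσe⟩)
  · exact Or.inr ((Set.ncard_le_one (Set.toFinite _)).mp hneg e ⟨he, hσe⟩ f ⟨⟨hf.1, hfX⟩, hfσ⟩)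

lemma Set.mem_of_subset_pair_of_even_ncard {α : Type*} {S : Set α} {a b : α} (hS : S ⊆ {a, b})
    (hb : b ∈ S) (hev : Even S.ncard) : a ∈ S := by
  by_contra ha
  have : S = {b} := Set.eq_singleton_iff_unique_mem.mpr
    ⟨hb, fun x hx => (hS hx).resolve_left fun h => ha (h ▸ hx)⟩
  rw [this, Set.ncard_singleton] at hev
  exact Nat.not_even_one hev

theorem stmt_7_general (G : SimpleGraph V) (σ : Sym2 V → Bool)
    (h2ec : TwoEdgeConnected G) (hmin : MinSignature G σ)
    (F : Multiset G.Subgraph)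
    (hneg : ∀ e ∈ G.edgeSet, σ e = true →
      ∃ C ∈ F, ∃ D : G.Subgraph, D ≤ C ∧ SubIsCycle G D ∧ e ∈ D.edgeSet) :
    ∀ e : Sym2 V, (posSubgraph G σ).IsBridge e → ∃ C ∈ F, e ∈ C.edgeSet := by
  intro e
  induction e using Sym2.ind with
  | _ u v =>
  intro hb
  obtain ⟨X, f, hfX, hfσ, hcut⟩ := cutEdges_subset_pair_of_isBridge h2ec hmin hb
  obtain ⟨C, hCF, D, hDC, hD, hfD⟩ := hneg f hfX.1 hfσ
  have hcrossD : {g ∈ D.edgeSet | crossesCut X g} ⊆ {s(u, v), f} :=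
    fun g hg => hcut ⟨D.edgeSet_subset hg.1, hg.2⟩
  have huvD := Set.mem_of_subset_pair_of_even_ncard hcrossD ⟨hfD, hfX.2⟩
    (hD.even_ncard_crossing X)
  exact ⟨C, hCF, Subgraph.edgeSet_mono hDC huvD.1⟩

theorem stmt_7 (G : SimpleGraph V) (σ : Sym2 V → Bool)
    (h2ec : TwoEdgeConnected G) (hmin : MinSignature G σ)
    (F : Multiset G.Subgraph) (hcirc : ∀ C ∈ F, IsCircuit G σ C)
    (hneg : ∀ e ∈ G.edgeSet, σ e = true →
      ∃ C ∈ F, ∃ D : G.Subgraph, D ≤ C ∧ SubIsCycle G D ∧ e ∈ D.edgeSet) :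
    ∀ e : Sym2 V, (posSubgraph G σ).IsBridge e → ∃ C ∈ F, e ∈ C.edgeSet :=
  stmt_7_general G σ h2ec hmin F hneg
end

section
/- Let (G,σ) be a 2-edge-connected signed graph whose signature has the minimum number of negative edges among equivalent signatures. Then the positive subgraph G⁺ = G \ E⁻(G,σ) is a connected spanning subgraph of G. -/
open SimpleGraph

open scoped Classical

variable {V : Type*} [Fintype V] [DecidableEq V]

/-!
If `G⁺` were disconnected, let `X` be the vertex set of a component of `G⁺`. Every edge of `G`
leaving `X` is negative, and since `G` is connected there is at least one. Switching at `X`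
makes all these edges positive and changes no other edge, so it lowers the number of negative
edges, contradicting minimality.
-/

section

omit [Fintype V] [DecidableEq V]

noncomputable def switchAt (X : Set V) (σ : Sym2 V → Bool) : Sym2 V → Bool :=
  fun e => if crossesCut X e then !σ e else σ e

theorem switchEquiv_switchAt (G : SimpleGraph V) (X : Set V) (σ : Sym2 V → Bool) :
    SwitchEquiv G σ (switchAt X σ) :=
  ⟨X, fun e _ => ⟨fun hc => by simp [switchAt, hc], fun hc => by simp [switchAt, hc]⟩⟩

theorem epsilonNeg_le_of_switchEquiv {G : SimpleGraph V} {σ σ' : Sym2 V → Bool}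
    (h : SwitchEquiv G σ σ') : epsilonNeg G σ ≤ negCount σ' G.edgeSet :=
  Nat.sInf_le ⟨σ', h, rfl⟩

theorem negEdges_switchAt_of_cutEdges_negative {G : SimpleGraph V} {X : Set V}
    {σ : Sym2 V → Bool} (hX : ∀ e ∈ cutEdges G X, σ e = true) :
    {e ∈ G.edgeSet | switchAt X σ e = true} = {e ∈ G.edgeSet | σ e = true} \ cutEdges G X := by
  ext e
  by_cases hc : crossesCut X e
  · by_cases he : e ∈ G.edgeSet
    · simp [switchAt, hc, he, cutEdges, hX e ⟨he, hc⟩]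
    · simp [he]
  · simp [switchAt, hc, cutEdges]

theorem cutEdges_nonempty_of_preconnected {G : SimpleGraph V} (hG : G.Preconnected)
    {X : Set V} {u v : V} (hu : u ∈ X) (hv : v ∉ X) : (cutEdges G X).Nonempty := by
  obtain ⟨d, -, hd₁, hd₂⟩ := (hG u v).some.exists_boundary_dart X hu hv
  exact ⟨d.edge, d.edge_mem, d.fst, d.snd, rfl, by simp [hd₁, hd₂]⟩

theorem not_adj_of_crossesCut_reachable (H : SimpleGraph V) (u : V) {a b : V}
    (hab : crossesCut {w | H.Reachable u w} s(a, b)) : ¬H.Adj a b := by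
  obtain ⟨a', b', he, hiff⟩ := hab
  intro hadj
  have hadj' : H.Adj a' b' := by
    rcases Sym2.eq_iff.1 he with ⟨rfl, rfl⟩ | ⟨rfl, rfl⟩
    exacts [hadj, hadj.symm]
  by_cases ha : H.Reachable u a'
  · exact hiff.1 ha (ha.trans hadj'.reachable)
  · exact ha ((not_not.1 (mt hiff.2 ha)).trans hadj'.symm.reachable)

theorem negative_of_mem_cutEdges_posSubgraph_reachable (G : SimpleGraph V)
    (σ : Sym2 V → Bool) (u : V) :
    ∀ e ∈ cutEdges G {w | (posSubgraph G σ).Reachable u w}, σ e = true := by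
  rintro ⟨a, b⟩ ⟨he, hab⟩
  by_contra hσ
  refine not_adj_of_crossesCut_reachable _ u hab ?_
  simpa [posSubgraph] using ⟨he, by simpa using hσ⟩

end

section

omit [DecidableEq V]

theorem MinSignature.cutEdges_eq_empty_of_negative {G : SimpleGraph V} {σ : Sym2 V → Bool}
    (hmin : MinSignature G σ) {X : Set V} (hX : ∀ e ∈ cutEdges G X, σ e = true) :
    cutEdges G X = ∅ := by
  by_contra hne
  have hssub : {e ∈ G.edgeSet | switchAt X σ e = true} ⊂ {e ∈ G.edgeSet | σ e = true} := by
    rw [negEdges_switchAt_of_cutEdges_negative hX, Set.sdiff_ssubset_left_iff]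
    obtain ⟨e, he⟩ := Set.nonempty_iff_ne_empty.2 hne
    exact ⟨e, ⟨he.1, hX e he⟩, he⟩
  have hlt : negCount (switchAt X σ) G.edgeSet < negCount σ G.edgeSet :=
    Set.ncard_lt_ncard hssub (Set.toFinite _)
  have hle := epsilonNeg_le_of_switchEquiv (switchEquiv_switchAt G X σ)
  rw [MinSignature] at hmin
  omega

end

theorem stmt_8 (G : SimpleGraph V) (σ : Sym2 V → Bool)
    (h2ec : TwoEdgeConnected G) (hmin : MinSignature G σ) :
    (posSubgraph G σ).Connected := by
  have : Nonempty V := h2ec.1.nonempty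
  refine ⟨fun u v => ?_⟩
  by_contra huv
  have hcut := hmin.cutEdges_eq_empty_of_negative
    (negative_of_mem_cutEdges_posSubgraph_reachable G σ u)
  exact (cutEdges_nonempty_of_preconnected h2ec.1.preconnected (Reachable.refl u) huv).ne_empty hcut
end

section
/- Let (G,σ) be a cubic signed graph with signed-girth g_s(G,σ) ≥ |E(G)|/3 + 2. Then (G,σ) does not contain two vertex-disjoint circuits each containing a negative edge. -/
open SimpleGraph

open scoped Classical

variable {V : Type*} [Fintype V] [DecidableEq V]

/-!
A circuit has at most one more edge than it has vertices: a cycle has as many edges as vertices,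
and in a barbell the connecting path shares exactly its two ends with the cycles. Hence two
vertex-disjoint circuits with negative edges, each of length at least the signed girth `g`, use at
least `2g - 2` of the `2|E|/3` vertices of the cubic graph, so `3g ≤ |E| + 3`.
-/

theorem Set.ncard_union_union_add_ncard_inter_add_ncard_inter {α : Type*} {A B Q : Set α}
    (hAB : A ∩ B ⊆ Q) (hA : A.Finite := by toFinite_tac) (hB : B.Finite := by toFinite_tac)
    (hQ : Q.Finite := by toFinite_tac) :
    (A ∪ B ∪ Q).ncard + (Q ∩ A).ncard + (Q ∩ B).ncard = A.ncard + B.ncard + Q.ncard := by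
  have hAQ_BQ : (Q ∩ A) ∩ (Q ∩ B) = A ∩ B := by
    ext x
    simp only [Set.mem_inter_iff]
    exact ⟨fun h => ⟨h.1.2, h.2.2⟩, fun h => ⟨⟨hAB h, h.1⟩, hAB h, h.2⟩⟩
  have hunion := Set.ncard_union_add_ncard_inter (Q ∩ A) (Q ∩ B) (hQ.inter_of_left _)
    (hQ.inter_of_left _)
  rw [← Set.inter_union_distrib_left, hAQ_BQ, Set.inter_comm] at hunion
  have hAB_card := Set.ncard_union_add_ncard_inter A B hA hB
  have hABQ_card := Set.ncard_union_add_ncard_inter (A ∪ B) Q (hA.union hB) hQ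
  omega

namespace SimpleGraph

variable {W : Type*}

theorem sum_ncard_neighborSet [Fintype W] (H : SimpleGraph W) :
    ∑ v, (H.neighborSet v).ncard = 2 * H.edgeSet.ncard := by
  classical
  have hdeg (v : W) : (H.neighborSet v).ncard = H.degree v := by
    rw [← card_neighborSet_eq_degree, Set.ncard_eq_toFinset_card', Set.toFinset_card]
  simp only [hdeg, sum_degrees_eq_twice_card_edges, ← coe_edgeFinset, Set.ncard_coe_finset]

theorem Subgraph.ncard_edgeSet_le_ncard_verts [Finite W] {G : SimpleGraph W} (C : G.Subgraph)
    (hdeg : ∀ v ∈ C.verts, (C.neighborSet v).ncard ≤ 2) : C.edgeSet.ncard ≤ C.verts.ncard := by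
  have : Fintype C.verts := Fintype.ofFinite _
  have hcoe_deg (v : C.verts) : (C.coe.neighborSet v).ncard ≤ 2 := by
    have himage : Subtype.val '' C.coe.neighborSet v = C.neighborSet v := by
      ext w
      exact ⟨fun ⟨_, hw, hval⟩ => hval ▸ hw, fun hw => ⟨⟨w, C.edge_vert hw.symm⟩, hw, rfl⟩⟩
    rw [← Set.ncard_image_of_injective _ Subtype.val_injective, himage]
    exact hdeg v v.2
  have hE : C.edgeSet.ncard = C.coe.edgeSet.ncard := by
    rw [← C.image_coe_edgeSet_coe,
      Set.ncard_image_of_injective _ (Sym2.map.injective Subtype.val_injective)]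
  have hsum := C.coe.sum_ncard_neighborSet
  have hsum_le : ∑ v : C.verts, (C.coe.neighborSet v).ncard ≤ 2 * C.verts.ncard :=
    calc ∑ v : C.verts, (C.coe.neighborSet v).ncard ≤ ∑ _v : C.verts, 2 :=
          Finset.sum_le_sum fun v _ => hcoe_deg v
      _ = 2 * C.verts.ncard := by simp [mul_comm]
  omega

theorem Walk.IsPath.ncard_edgeSet_toSubgraph_add_one {G : SimpleGraph W} {u v : W}
    {p : G.Walk u v} (hp : p.IsPath) :
    p.toSubgraph.edgeSet.ncard + 1 = p.toSubgraph.verts.ncard := by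
  classical
  rw [Walk.verts_toSubgraph, Walk.edgeSet_toSubgraph, Walk.edgeSet, ← List.coe_toFinset,
    ← List.coe_toFinset, Set.ncard_coe_finset, Set.ncard_coe_finset,
    List.toFinset_card_of_nodup hp.edges_nodup, List.toFinset_card_of_nodup hp.support_nodup,
    Walk.length_edges, Walk.length_support]

end SimpleGraph

section SignedGraph

variable {W : Type*} {G : SimpleGraph W} {σ : Sym2 W → Bool}

theorem SubIsCycle.ncard_edgeSet_le [Finite W] {C : G.Subgraph} (hC : SubIsCycle G C) :
    C.edgeSet.ncard ≤ C.verts.ncard :=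
  C.ncard_edgeSet_le_ncard_verts fun v hv => (hC.2 v hv).le

theorem IsPathSub.ncard_edgeSet_add_one {P : G.Subgraph} {u v : W} (hP : IsPathSub G P u v) :
    P.edgeSet.ncard + 1 = P.verts.ncard := by
  obtain ⟨p, hp, rfl⟩ := hP
  exact hp.ncard_edgeSet_toSubgraph_add_one

theorem IsBarbell.ncard_edgeSet_le [Finite W] {B : G.Subgraph} (hB : IsBarbell G σ B) :
    B.edgeSet.ncard ≤ B.verts.ncard + 1 := by
  obtain ⟨C₁, C₂, P, hC₁, hC₂, -, ⟨u, v, hP, -, -, hPC₁, hPC₂⟩, hC₁C₂, rfl⟩ := hB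
  have hverts := Set.ncard_union_union_add_ncard_inter_add_ncard_inter hC₁C₂ (Q := P.verts)
  rw [hPC₁, hPC₂, Set.ncard_singleton, Set.ncard_singleton] at hverts
  have hedges : (C₁ ⊔ C₂ ⊔ P).edgeSet.ncard ≤
      C₁.edgeSet.ncard + C₂.edgeSet.ncard + P.edgeSet.ncard := by
    simp only [Subgraph.edgeSet_sup]
    exact (Set.ncard_union_le _ _).trans (Nat.add_le_add_right (Set.ncard_union_le _ _) _)
  have := hC₁.1.ncard_edgeSet_le
  have := hC₂.1.ncard_edgeSet_le
  have := hP.ncard_edgeSet_add_one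
  change _ ≤ (C₁.verts ∪ C₂.verts ∪ P.verts).ncard + 1
  omega

theorem IsCircuit.ncard_edgeSet_le [Finite W] {C : G.Subgraph} (hC : IsCircuit G σ C) :
    C.edgeSet.ncard ≤ C.verts.ncard + 1 := by
  rcases hC with hpos | hbarbell
  · exact hpos.1.ncard_edgeSet_le.trans (Nat.le_succ _)
  · exact hbarbell.ncard_edgeSet_le

theorem signedGirth_le_ncard_edgeSet {C : G.Subgraph} (hC : IsCircuit G σ C)
    (hneg : 0 < negCount σ C.edgeSet) : signedGirth G σ ≤ C.edgeSet.ncard :=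
  Nat.sInf_le ⟨C, hC, hneg, rfl⟩

theorem IsCubic.three_mul_card_eq [Fintype W] (hG : IsCubic G) :
    3 * Fintype.card W = 2 * numEdges G := by
  rw [numEdges, ← G.sum_ncard_neighborSet, Finset.sum_congr rfl fun v _ => hG v, Finset.sum_const,
    Finset.card_univ, smul_eq_mul, mul_comm]

end SignedGraph

theorem stmt_11 (G : SimpleGraph V) (σ : Sym2 V → Bool) (hcubic : IsCubic G)
    (hgirth : numEdges G + 6 ≤ 3 * signedGirth G σ) :
    ¬∃ C₁ C₂ : G.Subgraph, IsCircuit G σ C₁ ∧ 0 < negCount σ C₁.edgeSet ∧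
      IsCircuit G σ C₂ ∧ 0 < negCount σ C₂.edgeSet ∧ C₁.verts ∩ C₂.verts = ∅ := by
  rintro ⟨C₁, C₂, hC₁, hneg₁, hC₂, hneg₂, hdisj⟩
  have h₁ := (signedGirth_le_ncard_edgeSet hC₁ hneg₁).trans hC₁.ncard_edgeSet_le
  have h₂ := (signedGirth_le_ncard_edgeSet hC₂ hneg₂).trans hC₂.ncard_edgeSet_le
  have hverts : C₁.verts.ncard + C₂.verts.ncard ≤ Fintype.card V := by
    rw [← Set.ncard_union_eq (Set.disjoint_iff_inter_eq_empty.mpr hdisj),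
      ← Nat.card_eq_fintype_card]
    exact Set.ncard_le_card _
  have hcard := hcubic.three_mul_card_eq
  omega
end

section
/- Let (G,σ) be a cubic signed graph with a circuit double cover F. If v is a vertex of degree 3 in a barbell B ∈ F, then v is also a vertex of degree 3 in another barbell B' ∈ F with B' ≠ B. -/
open SimpleGraph

open scoped Classical

variable {V : Type*} [Fintype V] [DecidableEq V]

section Aux

lemma path_internal_two_nbrs {G : SimpleGraph V} {a b : V} (p : G.Walk a b) (hp : p.IsPath)
    (x : V) (hx : x ∈ p.support) (hxa : x ≠ a) (hxb : x ≠ b) :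
    ∃ y z : V, y ≠ z ∧ p.toSubgraph.Adj x y ∧ p.toSubgraph.Adj x z := by
  induction p with
  | nil => simp at hx; exact absurd hx hxa
  | @cons a c b h q ih =>
    have hx' : x ∈ q.support := by
      have : x = a ∨ x ∈ q.support := by simpa [Walk.support_cons] using hx
      tauto
    by_cases hxc : x = c
    · subst hxc
      cases q with
      | nil => exact absurd rfl hxb
      | @cons _ d _ h' r =>
        refine ⟨a, d, ?_, ?_, ?_⟩
        · intro had
          have : a ∈ (Walk.cons h' r).support := by
            subst had; simp [Walk.support_cons]
          exact ((Walk.cons_isPath_iff h _).mp hp).2 this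
        · simp [Walk.toSubgraph, Subgraph.sup_adj, h.symm]
        · simp [Walk.toSubgraph, Subgraph.sup_adj, h']
    · obtain ⟨y, z, hyz, hy, hz⟩ := ih hp.of_cons hx' hxc hxb
      refine ⟨y, z, hyz, ?_, ?_⟩ <;>
        simp [Walk.toSubgraph, Subgraph.sup_adj, hy, hz]

/-- A vertex of a cycle subgraph with a neighbor has at least two neighbors. -/
lemma cycle_two_nbrs {G : SimpleGraph V} {C : G.Subgraph} (hC : SubIsCycle G C)
    {x : V} (hx : x ∈ C.verts) : (C.neighborSet x).ncard = 2 := hC.2 x hx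

/-- Every vertex of a circuit has either no neighbors or at least two. -/
lemma circuit_min_deg {G : SimpleGraph V} {σ : Sym2 V → Bool} {C : G.Subgraph}
    (h : IsCircuit G σ C) (x : V) (hne : (C.neighborSet x).Nonempty) :
    2 ≤ (C.neighborSet x).ncard := by
  obtain ⟨y, hy⟩ := hne
  rcases h with ⟨hcyc, _⟩ | ⟨C₁, C₂, P, hC₁, hC₂, _, ⟨u, w, ⟨q, hq, hPq⟩, huC₁, hwC₂, hPu, hPw⟩,
      _, hB⟩
  · exact (cycle_two_nbrs hcyc (C.edge_vert hy)).ge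
  · subst hB
    have hmono : ∀ D : G.Subgraph, D ≤ C₁ ⊔ C₂ ⊔ P →
        D.neighborSet x ⊆ (C₁ ⊔ C₂ ⊔ P).neighborSet x := fun D hD z hz => hD.2 hz
    have key : ∀ D : G.Subgraph, D ≤ C₁ ⊔ C₂ ⊔ P → SubIsCycle G D → x ∈ D.verts →
        2 ≤ ((C₁ ⊔ C₂ ⊔ P).neighborSet x).ncard := by
      intro D hD hDc hxD
      calc 2 = (D.neighborSet x).ncard := (cycle_two_nbrs hDc hxD).symm
        _ ≤ _ := Set.ncard_le_ncard (hmono D hD) (Set.toFinite _)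
    by_cases hx1 : x ∈ C₁.verts
    · exact key C₁ (le_sup_of_le_left le_sup_left) hC₁.1 hx1
    by_cases hx2 : x ∈ C₂.verts
    · exact key C₂ (le_sup_of_le_left le_sup_right) hC₂.1 hx2
    -- x only in the path
    have hyP : P.Adj x y := by
      rcases (Subgraph.sup_adj.mp hy) with hh | hh
      · rcases (Subgraph.sup_adj.mp hh) with hh' | hh'
        · exact absurd (C₁.edge_vert hh') hx1
        · exact absurd (C₂.edge_vert hh') hx2
      · exact hh
    have hxP : x ∈ P.verts := P.edge_vert hyP
    have hxq : x ∈ q.support := by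
      rw [hPq] at hxP
      exact (Walk.mem_verts_toSubgraph q).mp hxP
    have hxu : x ≠ u := by rintro rfl; exact hx1 huC₁
    have hxw : x ≠ w := by rintro rfl; exact hx2 hwC₂
    obtain ⟨y', z', hyz, hy', hz'⟩ := path_internal_two_nbrs q hq x hxq hxu hxw
    rw [← hPq] at hy' hz'
    have h2 : 1 < ((C₁ ⊔ C₂ ⊔ P).neighborSet x).ncard := by
      rw [Set.one_lt_ncard (Set.toFinite _)]
      exact ⟨y', Or.inr hy', z', Or.inr hz', hyz⟩
    exact h2

/-- A positive cycle has no vertex of degree 3. -/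
lemma poscycle_deg_ne_three {G : SimpleGraph V} {σ : Sym2 V → Bool} {C : G.Subgraph}
    (h : IsPosCycle G σ C) (x : V) : (C.neighborSet x).ncard ≠ 3 := by
  intro h3
  have hne : (C.neighborSet x).Nonempty := by
    rw [← Set.ncard_pos (Set.toFinite _)] at *; omega
  obtain ⟨y, hy⟩ := hne
  have := cycle_two_nbrs h.1 (C.edge_vert hy)
  omega

lemma multiset_finset_swap {α β : Type*} (S : Multiset α) (N : Finset β) (g : β → α → ℕ) :
    (S.map (fun a => ∑ b ∈ N, g b a)).sum = ∑ b ∈ N, (S.map (g b)).sum := by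
  induction S using Multiset.induction with
  | empty => simp
  | cons a S ih => simp [ih, Finset.sum_add_distrib]

lemma exists_pos_of_sum_pos {α : Type*} (S : Multiset α) (f : α → ℕ)
    (h : (S.map f).sum ≠ 0) : ∃ a ∈ S, f a ≠ 0 := by
  by_contra hc
  push_neg at hc
  exact h (Multiset.sum_eq_zero (by simpa using fun a ha => hc a ha))

end Aux

theorem stmt_14 (G : SimpleGraph V) (σ : Sym2 V → Bool) (hcubic : IsCubic G)
    (F : Multiset G.Subgraph) (hcirc : ∀ C ∈ F, IsCircuit G σ C)
    (hdc : ∀ e ∈ G.edgeSet, (F.map fun C => if e ∈ C.edgeSet then 1 else 0).sum = 2)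
    (B : G.Subgraph) (hB : B ∈ F) (hbar : IsBarbell G σ B)
    (v : V) (hv : v ∈ B.verts) (hdeg : (B.neighborSet v).ncard = 3) :
    ∃ B' ∈ F.erase B, IsBarbell G σ B' ∧ v ∈ B'.verts ∧ (B'.neighborSet v).ncard = 3 := by
  classical
  have hsub : B.neighborSet v ⊆ G.neighborSet v := B.neighborSet_subset v
  have hNeq : B.neighborSet v = G.neighborSet v :=
    Set.eq_of_subset_of_ncard_le hsub (by rw [hdeg, hcubic v]) (Set.toFinite _)
  set S := F.erase B with hS
  have hF : F = B ::ₘ S := (Multiset.cons_erase hB).symm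
  have hfin : (G.neighborSet v).Finite := Set.toFinite _
  set Nf : Finset V := hfin.toFinset with hNf
  have hNcard : Nf.card = 3 := by
    rw [hNf, ← Set.ncard_eq_toFinset_card _ hfin, hcubic v]
  set g : V → G.Subgraph → ℕ := fun u C => if s(v, u) ∈ C.edgeSet then 1 else 0 with hg
  -- each edge at v is covered once more by S
  have hone : ∀ u ∈ Nf, (S.map (g u)).sum = 1 := by
    intro u hu
    have hadj : G.Adj v u := by
      rw [hNf, Set.Finite.mem_toFinset] at hu; exact hu
    have h2 := hdc s(v, u) hadj
    rw [hF, Multiset.map_cons, Multiset.sum_cons] at h2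
    have hBe : s(v, u) ∈ B.edgeSet := by
      rw [SimpleGraph.Subgraph.mem_edgeSet]
      have : u ∈ B.neighborSet v := hNeq ▸ hadj
      exact this
    rw [if_pos hBe] at h2
    simp only [hg] at h2 ⊢
    omega
  -- degree of v in C equals the number of edges at v in C
  have hdegsum : ∀ C : G.Subgraph, (C.neighborSet v).ncard = ∑ u ∈ Nf, g u C := by
    intro C
    have hset : C.neighborSet v = ↑(Nf.filter fun u => s(v, u) ∈ C.edgeSet) := by
      ext u
      simp only [Finset.coe_filter, Set.mem_setOf_eq, hNf, Set.Finite.mem_toFinset,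
        SimpleGraph.Subgraph.mem_edgeSet, SimpleGraph.mem_neighborSet]
      exact ⟨fun h => ⟨h.adj_sub, h⟩, fun h => h.2⟩
    rw [hset, Set.ncard_coe_finset, Finset.card_filter]
  set f : G.Subgraph → ℕ := fun C => (C.neighborSet v).ncard with hf
  have htot : (S.map f).sum = 3 := by
    have : (S.map f).sum = (S.map fun C => ∑ u ∈ Nf, g u C).sum := by
      congr 1
      exact Multiset.map_congr rfl fun C _ => hdegsum C
    rw [this, multiset_finset_swap, Finset.sum_congr rfl hone, Finset.sum_const,
      smul_eq_mul, mul_one, hNcard]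
  -- min-degree bound for circuits in S
  have hmin : ∀ C ∈ S, f C ≠ 0 → 2 ≤ f C := by
    intro C hC h0
    have hCF : C ∈ F := Multiset.mem_of_mem_erase hC
    have hne : (C.neighborSet v).Nonempty := Set.nonempty_of_ncard_ne_zero h0
    exact circuit_min_deg (hcirc C hCF) v hne
  -- find the circuit with positive degree
  obtain ⟨C, hCS, hC0⟩ := exists_pos_of_sum_pos S f (by omega)
  have hS' : S = C ::ₘ S.erase C := (Multiset.cons_erase hCS).symm
  have hsum' : f C + ((S.erase C).map f).sum = 3 := by
    rw [hS', Multiset.map_cons, Multiset.sum_cons] at htot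
    exact htot
  have hC2 : 2 ≤ f C := hmin C hCS hC0
  have hC3 : f C = 3 := by
    by_contra hne3
    have hfc2 : f C = 2 := by omega
    have hrest : ((S.erase C).map f).sum = 1 := by omega
    obtain ⟨C', hC'S, hC'0⟩ := exists_pos_of_sum_pos (S.erase C) f (by omega)
    have hS'' : S.erase C = C' ::ₘ (S.erase C).erase C' := (Multiset.cons_erase hC'S).symm
    rw [hS'', Multiset.map_cons, Multiset.sum_cons] at hrest
    have := hmin C' (Multiset.mem_of_mem_erase hC'S) hC'0
    omega
  have hvC : v ∈ C.verts := by
    have hne : (C.neighborSet v).Nonempty := Set.nonempty_of_ncard_ne_zero hC0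
    obtain ⟨y, hy⟩ := hne
    exact C.edge_vert hy
  have hbar' : IsBarbell G σ C := by
    rcases hcirc C (Multiset.mem_of_mem_erase hCS) with hpos | hb
    · exact absurd hC3 (poscycle_deg_ne_three hpos v)
    · exact hb
  exact ⟨C, hCS, hbar', hvC, hC3⟩
end
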